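/- Let F be a topological space and let π : E → B be a fiber bundle with typical fiber F over a base space B that is contractible (and paracompact Hausdorff). Then the bundle is trivial: there exists a trivialization of π whose base set is all of B, i.e. a fiberwise homeomorphism E ≃ B × F over B. -/

import Mathlib

open Set Topology Function
open scoped Classical

namespace ContractibleTrivProof

set_option linter.unusedSectionVars false
set_option maxHeartbeats 1000000



set_option linter.unusedSectionVars false

variable {B E F : Type*} [TopologicalSpace B] [TopologicalSpace E] [TopologicalSpace F]

section Tot
variable (π : E → B) (H : B × ℝ → B)

/-- Total space of the pullback of `π` along `H : B × ℝ → B`. -/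
@[reducible] def Tot : Type _ := {p : (B × ℝ) × E // π p.2 = H p.1}

instance : TopologicalSpace (Tot π H) := instTopologicalSpaceSubtype

/-- Projection of the pullback bundle. -/
def pr : Tot π H → B × ℝ := fun z => z.1.1

lemma continuous_pr : Continuous (pr π H) :=
  continuous_fst.comp continuous_subtype_val

lemma continuous_snd' : Continuous (fun z : Tot π H => z.1.2) :=
  continuous_snd.comp continuous_subtype_val

variable {π H}

@[ext] lemma Tot.ext {z w : Tot π H} (h1 : pr π H z = pr π H w) (h2 : z.1.2 = w.1.2) : z = w :=
  Subtype.ext (Prod.ext h1 h2)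

lemma Tot.prop' (z : Tot π H) : π z.1.2 = H (pr π H z) := z.2

/-- An open subset of the base contained in the base set of a trivialization has open
preimage under the projection. -/
lemma isOpen_preimage_of_subset {X Z : Type*} [TopologicalSpace X] [TopologicalSpace Z]
    {q : Z → X} (e : Bundle.Trivialization F q) {s : Set X} (hs : IsOpen s)
    (hsub : s ⊆ e.baseSet) : IsOpen (q ⁻¹' s) := by
  have h1 : e.source ∩ q ⁻¹' s = q ⁻¹' s := by
    rw [e.source_eq]
    exact inter_eq_self_of_subset_right (preimage_mono hsub)
  have h2 : e.target ∩ s ×ˢ (univ : Set F) = s ×ˢ (univ : Set F) := by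
    rw [e.target_eq]
    exact inter_eq_self_of_subset_right (prod_mono_left hsub)
  have := (e.isImage_preimage_prod s).isOpen_iff (s := q ⁻¹' s)
  rw [h1, h2] at this
  exact this.2 (hs.prod isOpen_univ)

section Pullback

variable (hH : Continuous H) (e : Bundle.Trivialization F π) [Nonempty (Tot π H)]

/-- Pullback of a trivialization of `π` to a trivialization of `pr π H`. -/
noncomputable def pb : Bundle.Trivialization F (pr π H) where
  toOpenPartialHomeomorph :=
    { toFun := fun z => (pr π H z, (e z.1.2).2)
      invFun := fun p =>
        if h : H p.1 ∈ e.baseSet then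
          ⟨(p.1, e.toOpenPartialHomeomorph.symm (H p.1, p.2)), by
            simpa using e.proj_symm_apply (e.mem_target.2 h)⟩
        else Classical.arbitrary _
      source := pr π H ⁻¹' (H ⁻¹' e.baseSet)
      target := (H ⁻¹' e.baseSet) ×ˢ univ
      map_source' := fun z hz => ⟨hz, mem_univ _⟩
      map_target' := fun p hp => by
        have h : H p.1 ∈ e.baseSet := hp.1
        simp only [dif_pos h]
        exact hp.1
      left_inv' := fun z hz => by
        have hz' : H (pr π H z) ∈ e.baseSet := hz
        have hzs : z.1.2 ∈ e.source := e.mem_source.2 (z.prop'.symm ▸ hz')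
        simp only [dif_pos hz']
        apply Tot.ext
        · rfl
        · show e.toOpenPartialHomeomorph.symm (H (pr π H z), (e z.1.2).2) = z.1.2
          have h2 : (H (pr π H z), (e z.1.2).2) = e z.1.2 := by
            refine Prod.ext ?_ rfl
            rw [e.coe_fst hzs, z.prop']
          rw [h2]
          exact e.toOpenPartialHomeomorph.left_inv hzs
      right_inv' := fun p hp => by
        have h : H p.1 ∈ e.baseSet := hp.1
        simp only [dif_pos h]
        have ht : (H p.1, p.2) ∈ e.target := e.mem_target.2 h
        refine Prod.ext rfl ?_
        show (e (e.toOpenPartialHomeomorph.symm (H p.1, p.2))).2 = p.2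
        rw [e.apply_symm_apply ht]
      open_source := (continuous_pr π H).isOpen_preimage _ (hH.isOpen_preimage _ e.open_baseSet)
      open_target := (hH.isOpen_preimage _ e.open_baseSet).prod isOpen_univ
      continuousOn_toFun := by
        apply ContinuousOn.prodMk (continuous_pr π H).continuousOn
        have h1 : ContinuousOn (fun z : Tot π H => e z.1.2) (pr π H ⁻¹' (H ⁻¹' e.baseSet)) := by
          refine e.toOpenPartialHomeomorph.continuousOn.comp (continuous_snd' π H).continuousOn ?_
          intro z hz
          exact e.mem_source.2 (z.prop'.symm ▸ hz)
        exact continuous_snd.comp_continuousOn h1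
      continuousOn_invFun := by
        refine Topology.IsInducing.subtypeVal.continuousOn_iff.2 ?_
        refine ContinuousOn.congr (f := fun p : (B × ℝ) × F => (p.1, e.toOpenPartialHomeomorph.symm (H p.1, p.2))) ?_ ?_
        · apply ContinuousOn.prodMk continuous_fst.continuousOn
          refine e.toOpenPartialHomeomorph.continuousOn_symm.comp
            ((hH.comp continuous_fst).prodMk continuous_snd).continuousOn ?_
          intro p hp
          exact e.mem_target.2 hp.1
        · intro p hp
          simp only [Function.comp, dif_pos (show H p.1 ∈ e.baseSet from hp.1)]
      }
  baseSet := H ⁻¹' e.baseSet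
  open_baseSet := hH.isOpen_preimage _ e.open_baseSet
  source_eq := rfl
  target_eq := rfl
  proj_toFun := fun z _ => rfl

@[simp] lemma pb_baseSet : (pb hH e : Bundle.Trivialization F (pr π H)).baseSet = H ⁻¹' e.baseSet := rfl

end Pullback
end Tot
section AdjustOuter
variable {B F : Type*} [TopologicalSpace B] [TopologicalSpace F]
variable {Z : Type*} [TopologicalSpace Z] {q : Z → B × ℝ}


section Adjust

variable (Φ₁ Φ₂ : Bundle.Trivialization F q) {U : Set B} (hU : IsOpen U) (c : ℝ)
  (h₁ : ∀ x ∈ U, ((x : B), c) ∈ Φ₁.baseSet) (h₂ : ∀ x ∈ U, ((x : B), c) ∈ Φ₂.baseSet)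


/-- Adjust `Φ₂` by the `Φ₂ → Φ₁` coordinate change at time level `c`, restricted over `U`. -/
noncomputable def adjust : Bundle.Trivialization F q where
  toOpenPartialHomeomorph :=
    { toFun := fun z =>
        (q z, (Φ₁ (Φ₂.toOpenPartialHomeomorph.symm (((q z).1, c), (Φ₂ z).2))).2)
      invFun := fun p =>
        Φ₂.toOpenPartialHomeomorph.symm (p.1, (Φ₂ (Φ₁.toOpenPartialHomeomorph.symm ((p.1.1, c), p.2))).2)
      source := q ⁻¹' (Φ₂.baseSet ∩ U ×ˢ univ)
      target := (Φ₂.baseSet ∩ U ×ˢ univ) ×ˢ univ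
      map_source' := fun z hz => ⟨hz, mem_univ _⟩
      map_target' := fun p hp => by
        have h : p.1 ∈ Φ₂.baseSet := hp.1.1
        have : q (Φ₂.toOpenPartialHomeomorph.symm
            (p.1, (Φ₂ (Φ₁.toOpenPartialHomeomorph.symm ((p.1.1, c), p.2))).2)) = p.1 :=
          Φ₂.proj_symm_apply (Φ₂.mem_target.2 h)
        simpa [this] using hp.1
      left_inv' := fun z hz => by
        obtain ⟨hz2, hzU⟩ := (mem_preimage.1 hz)
        have hxU : (q z).1 ∈ U := hzU.1
        have hc1 : ((q z).1, c) ∈ Φ₁.baseSet := h₁ _ hxU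
        have hc2 : ((q z).1, c) ∈ Φ₂.baseSet := h₂ _ hxU
        have hzs : z ∈ Φ₂.source := Φ₂.mem_source.2 hz2
        set w := Φ₂.toOpenPartialHomeomorph.symm (((q z).1, c), (Φ₂ z).2) with hw
        have hwt : (((q z).1, c), (Φ₂ z).2) ∈ Φ₂.target := Φ₂.mem_target.2 hc2
        have hqw : q w = ((q z).1, c) := Φ₂.proj_symm_apply hwt
        have hws1 : w ∈ Φ₁.source := Φ₁.mem_source.2 (hqw ▸ hc1)
        have hΦ1w : Φ₁ w = (((q z).1, c), (Φ₁ w).2) := by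
          refine Prod.ext ?_ rfl
          rw [Φ₁.coe_fst hws1, hqw]
        show Φ₂.toOpenPartialHomeomorph.symm
          (q z, (Φ₂ (Φ₁.toOpenPartialHomeomorph.symm (((q z).1, c), (Φ₁ w).2))).2) = z
        have hli : Φ₁.toOpenPartialHomeomorph.symm (Φ₁ w) = w := Φ₁.toOpenPartialHomeomorph.left_inv hws1
        rw [← hΦ1w, hli]
        have : Φ₂ w = (((q z).1, c), (Φ₂ z).2) := Φ₂.apply_symm_apply hwt
        rw [this]
        have hΦ2z : (q z, (Φ₂ z).2) = Φ₂ z := by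
          refine Prod.ext ?_ rfl
          rw [Φ₂.coe_fst hzs]
        have hli2 : Φ₂.toOpenPartialHomeomorph.symm (Φ₂ z) = z := Φ₂.toOpenPartialHomeomorph.left_inv hzs
        rw [hΦ2z]
        exact hli2
      right_inv' := fun p hp => by
        have hxU : p.1.1 ∈ U := hp.1.2.1
        have hc1 : (p.1.1, c) ∈ Φ₁.baseSet := h₁ _ hxU
        have hc2 : (p.1.1, c) ∈ Φ₂.baseSet := h₂ _ hxU
        set w := Φ₁.toOpenPartialHomeomorph.symm ((p.1.1, c), p.2) with hw
        have hwt1 : ((p.1.1, c), p.2) ∈ Φ₁.target := Φ₁.mem_target.2 hc1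
        have hqw : q w = (p.1.1, c) := Φ₁.proj_symm_apply hwt1
        have hws2 : w ∈ Φ₂.source := Φ₂.mem_source.2 (hqw ▸ hc2)
        set z := Φ₂.toOpenPartialHomeomorph.symm (p.1, (Φ₂ w).2) with hz
        have hzt : (p.1, (Φ₂ w).2) ∈ Φ₂.target := Φ₂.mem_target.2 hp.1.1
        have hqz : q z = p.1 := Φ₂.proj_symm_apply hzt
        have hΦ2z : Φ₂ z = (p.1, (Φ₂ w).2) := Φ₂.apply_symm_apply hzt
        have hΦ2w : Φ₂ w = ((p.1.1, c), (Φ₂ w).2) := by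
          refine Prod.ext ?_ rfl
          rw [Φ₂.coe_fst hws2, hqw]
        refine Prod.ext (by simpa using hqz) ?_
        show (Φ₁ (Φ₂.toOpenPartialHomeomorph.symm (((q z).1, c), (Φ₂ z).2))).2 = p.2
        rw [hΦ2z, hqz]
        show (Φ₁ (Φ₂.toOpenPartialHomeomorph.symm ((p.1.1, c), (Φ₂ w).2))).2 = p.2
        have hli3 : Φ₂.toOpenPartialHomeomorph.symm (Φ₂ w) = w := Φ₂.toOpenPartialHomeomorph.left_inv hws2
        rw [← hΦ2w, hli3, Φ₁.apply_symm_apply hwt1]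
      open_source := isOpen_preimage_of_subset Φ₂ (Φ₂.open_baseSet.inter (hU.prod isOpen_univ))
        inter_subset_left
      open_target := ((Φ₂.open_baseSet.inter (hU.prod isOpen_univ)).prod isOpen_univ)
      continuousOn_toFun := by
        have hsub : q ⁻¹' (Φ₂.baseSet ∩ U ×ˢ univ) ⊆ Φ₂.source := by
          rw [Φ₂.source_eq]; exact preimage_mono inter_subset_left
        -- fun z => (q z, κ)
        have hq2 : ContinuousOn (fun z => q z) (q ⁻¹' (Φ₂.baseSet ∩ U ×ˢ univ)) := by
          refine ContinuousOn.congr (f := fun z => (Φ₂ z).1) ?_ ?_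
          · exact continuous_fst.comp_continuousOn ((Φ₂.toOpenPartialHomeomorph.continuousOn.mono hsub : ContinuousOn (fun z => Φ₂ z) _))
          · intro z hz; exact (Φ₂.coe_fst (hsub hz)).symm
        refine ContinuousOn.prodMk hq2 ?_
        -- inner: z ↦ (((q z).1,c),(Φ₂ z).2) continuous on source into Φ₂.target
        have hinner : ContinuousOn (fun z => ((( q z).1, c), (Φ₂ z).2))
            (q ⁻¹' (Φ₂.baseSet ∩ U ×ˢ univ)) :=
          (((continuous_fst.comp_continuousOn hq2).prodMk continuousOn_const)).prodMk
            (continuous_snd.comp_continuousOn ((Φ₂.toOpenPartialHomeomorph.continuousOn.mono hsub : ContinuousOn (fun z => Φ₂ z) _)))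
        have hmid : ContinuousOn (fun z => Φ₂.toOpenPartialHomeomorph.symm ((( q z).1, c), (Φ₂ z).2))
            (q ⁻¹' (Φ₂.baseSet ∩ U ×ˢ univ)) := by
          refine Φ₂.toOpenPartialHomeomorph.continuousOn_symm.comp hinner ?_
          intro z hz
          exact Φ₂.mem_target.2 (h₂ _ hz.2.1)
        refine continuous_snd.comp_continuousOn ((Φ₁.toOpenPartialHomeomorph.continuousOn : ContinuousOn (fun z => Φ₁ z) _).comp hmid ?_)
        intro z hz
        refine Φ₁.mem_source.2 ?_
        have : q (Φ₂.toOpenPartialHomeomorph.symm ((( q z).1, c), (Φ₂ z).2)) = ((q z).1, c) :=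
          Φ₂.proj_symm_apply (Φ₂.mem_target.2 (h₂ _ hz.2.1))
        rw [this]
        exact h₁ _ hz.2.1
      continuousOn_invFun := by
        set T := (Φ₂.baseSet ∩ U ×ˢ univ) ×ˢ (univ : Set F) with hT
        have hinner : ContinuousOn (fun p : (B × ℝ) × F => ((p.1.1, c), p.2)) T :=
          (((continuous_fst.comp continuous_fst).prodMk continuous_const).prodMk
            continuous_snd).continuousOn
        have hw : ContinuousOn
            (fun p : (B × ℝ) × F => Φ₁.toOpenPartialHomeomorph.symm ((p.1.1, c), p.2)) T := by
          refine Φ₁.toOpenPartialHomeomorph.continuousOn_symm.comp hinner ?_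
          intro p hp
          exact Φ₁.mem_target.2 (h₁ _ hp.1.2.1)
        have hΦ2w : ContinuousOn
            (fun p : (B × ℝ) × F => (Φ₂ (Φ₁.toOpenPartialHomeomorph.symm ((p.1.1, c), p.2))).2) T := by
          refine continuous_snd.comp_continuousOn ((Φ₂.toOpenPartialHomeomorph.continuousOn : ContinuousOn (fun z => Φ₂ z) _).comp hw ?_)
          intro p hp
          refine Φ₂.mem_source.2 ?_
          have : q (Φ₁.toOpenPartialHomeomorph.symm ((p.1.1, c), p.2)) = (p.1.1, c) :=
            Φ₁.proj_symm_apply (Φ₁.mem_target.2 (h₁ _ hp.1.2.1))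
          rw [this]
          exact h₂ _ hp.1.2.1
        refine Φ₂.toOpenPartialHomeomorph.continuousOn_symm.comp
          ((continuous_fst.continuousOn).prodMk hΦ2w) ?_
        intro p hp
        exact Φ₂.mem_target.2 hp.1.1 }
  baseSet := Φ₂.baseSet ∩ U ×ˢ univ
  open_baseSet := Φ₂.open_baseSet.inter (hU.prod isOpen_univ)
  source_eq := rfl
  target_eq := rfl
  proj_toFun := fun z _ => rfl

@[simp] lemma adjust_baseSet : (adjust Φ₁ Φ₂ hU c h₁ h₂).baseSet = Φ₂.baseSet ∩ U ×ˢ univ := rfl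

lemma adjust_apply (z : Z) : adjust Φ₁ Φ₂ hU c h₁ h₂ z =
    (q z, (Φ₁ (Φ₂.toOpenPartialHomeomorph.symm (((q z).1, c), (Φ₂ z).2))).2) := rfl

end Adjust

end AdjustOuter
section ChainOuter

variable {B F : Type*} [TopologicalSpace B] [TopologicalSpace F]
variable {Z : Type*} [TopologicalSpace Z] {q : Z → B × ℝ}

lemma frontier_univ_prod_Iic (c : ℝ) :
    frontier ((univ : Set B) ×ˢ Iic c) = (univ : Set B) ×ˢ ({c} : Set ℝ) := by
  rw [frontier_prod_eq]
  simp [frontier_Iic]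

lemma chain (Φ₁ Φ₂ : Bundle.Trivialization F q) {U : Set B} (hU : IsOpen U) {a c b : ℝ}
    (hac : a ≤ c) (hcb : c ≤ b)
    (h₁ : U ×ˢ Icc a c ⊆ Φ₁.baseSet) (h₂ : U ×ˢ Icc c b ⊆ Φ₂.baseSet) :
    ∃ Φ : Bundle.Trivialization F q, U ×ˢ Icc a b ⊆ Φ.baseSet := by
  have hc₁ : ∀ x ∈ U, ((x : B), c) ∈ Φ₁.baseSet := fun x hx => h₁ ⟨hx, hac, le_refl c⟩
  have hc₂ : ∀ x ∈ U, ((x : B), c) ∈ Φ₂.baseSet := fun x hx => h₂ ⟨hx, le_refl c, hcb⟩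
  set e := Φ₁.restrOpen (U ×ˢ univ) (hU.prod isOpen_univ) with he
  set e' := adjust Φ₁ Φ₂ hU c hc₁ hc₂ with he'
  have hebs : e.baseSet = Φ₁.baseSet ∩ U ×ˢ univ := rfl
  have he'bs : e'.baseSet = Φ₂.baseSet ∩ U ×ˢ univ := rfl
  set s := (univ : Set B) ×ˢ Iic c with hs
  have hfr : frontier s = (univ : Set B) ×ˢ ({c} : Set ℝ) := frontier_univ_prod_Iic c
  have hbsfr : e.baseSet ∩ frontier s = U ×ˢ ({c} : Set ℝ) := by
    rw [hebs, hfr]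
    ext p
    constructor
    · rintro ⟨⟨-, hU1⟩, -, hc⟩
      exact ⟨hU1.1, hc⟩
    · rintro ⟨hpU, hpc⟩
      have hpc' : p.2 = c := hpc
      refine ⟨⟨?_, hpU, trivial⟩, trivial, hpc⟩
      have : p = (p.1, c) := by rw [← hpc']
      rw [this]
      exact hc₁ _ hpU
  have hbsfr' : e'.baseSet ∩ frontier s = U ×ˢ ({c} : Set ℝ) := by
    rw [he'bs, hfr]
    ext p
    constructor
    · rintro ⟨⟨-, hU1⟩, -, hc⟩
      exact ⟨hU1.1, hc⟩
    · rintro ⟨hpU, hpc⟩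
      have hpc' : p.2 = c := hpc
      refine ⟨⟨?_, hpU, trivial⟩, trivial, hpc⟩
      have : p = (p.1, c) := by rw [← hpc']
      rw [this]
      exact hc₂ _ hpU
  have Hs : e.baseSet ∩ frontier s = e'.baseSet ∩ frontier s := by rw [hbsfr, hbsfr']
  have Heq : EqOn ⇑e ⇑e' (q ⁻¹' (e.baseSet ∩ frontier s)) := by
    intro z hz
    rw [hbsfr] at hz
    have hz' : q z ∈ U ×ˢ ({c} : Set ℝ) := hz
    have hxU : (q z).1 ∈ U := hz'.1
    have hqzc : (q z).2 = c := hz'.2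
    have hqz : q z = ((q z).1, c) := by
      rw [← hqzc]
    have hz2 : q z ∈ Φ₂.baseSet := by rw [hqz]; exact hc₂ _ hxU
    have hz1 : q z ∈ Φ₁.baseSet := by rw [hqz]; exact hc₁ _ hxU
    have hzs2 : z ∈ Φ₂.source := Φ₂.mem_source.2 hz2
    have hzs1 : z ∈ Φ₁.source := Φ₁.mem_source.2 hz1
    show Φ₁ z = e' z
    rw [adjust_apply]
    have hΦ2z : (((q z).1, c), (Φ₂ z).2) = Φ₂ z := by
      refine Prod.ext ?_ rfl
      rw [Φ₂.coe_fst hzs2, hqz]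
    rw [hΦ2z]
    have hli : Φ₂.toOpenPartialHomeomorph.symm (Φ₂ z) = z := Φ₂.toOpenPartialHomeomorph.left_inv hzs2
    rw [hli]
    refine Prod.ext ?_ rfl
    rw [Φ₁.coe_fst hzs1]
  refine ⟨e.piecewise e' s Hs Heq, ?_⟩
  have hbs : (e.piecewise e' s Hs Heq).baseSet = Set.ite s e.baseSet e'.baseSet := rfl
  rw [hbs]
  rintro ⟨x, t⟩ ⟨hxU, hta, htb⟩
  by_cases htc : t ≤ c
  · left
    exact ⟨⟨h₁ ⟨hxU, hta, htc⟩, hxU, trivial⟩, trivial, htc⟩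
  · right
    push_neg at htc
    refine ⟨⟨h₂ ⟨hxU, le_of_lt htc, htb⟩, hxU, trivial⟩, ?_⟩
    simp only [hs, mem_prod, mem_Iic]
    push_neg
    intro
    exact htc


end ChainOuter
section StripOuter

set_option linter.unusedSectionVars false
set_option maxHeartbeats 1000000

variable {B F : Type*} [TopologicalSpace B] [TopologicalSpace F]
variable {Z : Type*} [TopologicalSpace Z] {q : Z → B × ℝ}

lemma exists_strip (hq : ∀ p : B × ℝ, ∃ e : Bundle.Trivialization F q, p ∈ e.baseSet) (x : B) :
    ∃ U : Set B, IsOpen U ∧ x ∈ U ∧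
      ∃ Φ : Bundle.Trivialization F q, U ×ˢ Icc (0:ℝ) 1 ⊆ Φ.baseSet := by
  -- choose charts along the segment {x} × [0,1]
  choose e he using fun t : ℝ => hq (x, t)
  -- product neighborhoods
  have hnbhd : ∀ t : ℝ, ∃ u v, IsOpen u ∧ IsOpen v ∧ x ∈ u ∧ t ∈ v ∧ u ×ˢ v ⊆ (e t).baseSet :=
    fun t => isOpen_prod_iff.1 (e t).open_baseSet x t (he t)
  choose u v hu hv hxu htv huv using hnbhd
  -- Lebesgue number for the cover of [0,1] by the v t
  obtain ⟨δ, hδ, hleb⟩ := lebesgue_number_lemma_of_metric (isCompact_Icc (a := (0:ℝ)) (b := 1))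
    hv (fun t ht => mem_iUnion.2 ⟨t, htv t⟩)
  obtain ⟨n, hn⟩ := exists_nat_one_div_lt hδ
  set N : ℝ := (n : ℝ) + 1 with hN
  have hNpos : (0:ℝ) < N := by positivity
  -- induction: trivialization over U × [0, j/N]
  have key : ∀ j : ℕ, j ≤ n + 1 → ∃ U : Set B, IsOpen U ∧ x ∈ U ∧
      ∃ Φ : Bundle.Trivialization F q, U ×ˢ Icc (0:ℝ) (j / N) ⊆ Φ.baseSet := by
    intro j
    induction j with
    | zero =>
      intro _
      refine ⟨u 0, hu 0, hxu 0, e 0, ?_⟩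
      rintro ⟨y, t⟩ ⟨hy, ht0, ht1⟩
      have : t = 0 := le_antisymm (by simpa using ht1) ht0
      subst this
      exact huv 0 ⟨hy, htv 0⟩
    | succ j ih =>
      intro hj
      obtain ⟨U, hU, hxU, Φ, hΦ⟩ := ih (Nat.le_of_succ_le hj)
      -- the segment [j/N, (j+1)/N] lies in some chart
      have hjN : (j : ℝ) / N ∈ Icc (0:ℝ) 1 := by
        constructor
        · positivity
        · rw [div_le_one hNpos]
          have : (j : ℝ) ≤ (n : ℝ) + 1 := by exact_mod_cast le_trans (Nat.le_succ j) hj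
          linarith
      obtain ⟨t₀, ht₀⟩ := hleb _ hjN
      have hseg : Icc ((j:ℝ)/N) ((j+1:ℕ)/N) ⊆ Metric.ball ((j:ℝ)/N) δ := by
        intro y hy
        rw [Metric.mem_ball, Real.dist_eq, abs_of_nonneg (by linarith [hy.1])]
        have h1 : ((j+1:ℕ):ℝ)/N - (j:ℝ)/N = 1/N := by
          push_cast
          field_simp
          ring
        have := hy.2
        calc y - (j:ℝ)/N ≤ ((j+1:ℕ):ℝ)/N - (j:ℝ)/N := by linarith
        _ = 1/N := h1
        _ < δ := hn
      set U' := U ∩ u t₀ with hU'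
      have h0c : (0:ℝ) ≤ (j:ℝ)/N := by positivity
      have hcb : (j:ℝ)/N ≤ ((j+1:ℕ):ℝ)/N := by
        gcongr
        exact_mod_cast Nat.le_succ j
      have h₁ : U' ×ˢ Icc (0:ℝ) ((j:ℝ)/N) ⊆ Φ.baseSet := fun p hp => hΦ ⟨hp.1.1, hp.2⟩
      have h₂ : U' ×ˢ Icc ((j:ℝ)/N) (((j+1:ℕ):ℝ)/N) ⊆ (e t₀).baseSet := by
        intro p hp
        exact huv t₀ ⟨hp.1.2, ht₀ (hseg hp.2)⟩
      obtain ⟨Φ', hΦ'⟩ := chain Φ (e t₀) (hU.inter (hu t₀)) h0c hcb h₁ h₂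
      exact ⟨U', hU.inter (hu t₀), ⟨hxU, hxu t₀⟩, Φ', hΦ'⟩
  obtain ⟨U, hU, hxU, Φ, hΦ⟩ := key (n+1) le_rfl
  refine ⟨U, hU, hxU, Φ, ?_⟩
  have : ((n+1 : ℕ) : ℝ) / N = 1 := by
    rw [hN]; push_cast; field_simp
  rw [← this]
  exact_mod_cast hΦ


end StripOuter
section ClampOuter
variable {B E F : Type*} [TopologicalSpace B] [TopologicalSpace E] [TopologicalSpace F]
variable {π : E → B} {H : B × ℝ → B}


/-- clamp to [0,1] -/
noncomputable def cl (t : ℝ) : ℝ := max 0 (min t 1)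

lemma continuous_cl : Continuous cl := continuous_const.max (continuous_id.min continuous_const)

lemma cl_mem_Icc (t : ℝ) : cl t ∈ Icc (0:ℝ) 1 :=
  ⟨le_max_left _ _, max_le (by norm_num) (min_le_right _ _)⟩

section ClampExt

variable [Nonempty (Tot π H)] (hHcl : ∀ p : B × ℝ, H p = H (p.1, cl p.2))
  (Φ : Bundle.Trivialization F (pr π H)) {U : Set B} (hU : IsOpen U)
  (hΦ : U ×ˢ Icc (0:ℝ) 1 ⊆ Φ.baseSet)

/-- clamp the time coordinate of a point of `Tot`. -/
noncomputable def clampZ (z : Tot π H) : Tot π H :=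
  ⟨(((pr π H z).1, cl (pr π H z).2), z.1.2), z.2.trans (hHcl _)⟩

lemma continuous_clampZ : Continuous (clampZ (π := π) (H := H) hHcl) := by
  apply Continuous.subtype_mk
  exact (((continuous_pr π H).fst.prodMk
    (continuous_cl.comp (continuous_pr π H).snd)).prodMk (continuous_snd' π H))

lemma pr_clampZ (z : Tot π H) :
    pr π H (clampZ hHcl z) = ((pr π H z).1, cl (pr π H z).2) := rfl

/-- Extend a trivialization over `U × [0,1]` to one over `U × ℝ`, using that the bundle
is pulled back along a map constant in time outside `[0,1]`. -/
noncomputable def clampExt : Bundle.Trivialization F (pr π H) where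
  toOpenPartialHomeomorph :=
    { toFun := fun z => (pr π H z, (Φ (clampZ hHcl z)).2)
      invFun := fun p =>
        if h : p.1.1 ∈ U then
          ⟨(p.1, (Φ.toOpenPartialHomeomorph.symm ((p.1.1, cl p.1.2), p.2)).1.2), by
            have hbs : (p.1.1, cl p.1.2) ∈ Φ.baseSet := hΦ ⟨h, cl_mem_Icc _⟩
            have hpr : pr π H (Φ.toOpenPartialHomeomorph.symm ((p.1.1, cl p.1.2), p.2))
                = (p.1.1, cl p.1.2) := Φ.proj_symm_apply (Φ.mem_target.2 hbs)
            have := (Φ.toOpenPartialHomeomorph.symm ((p.1.1, cl p.1.2), p.2)).prop'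
            rw [hpr] at this
            rw [this, ← hHcl p.1]⟩
        else Classical.arbitrary _
      source := pr π H ⁻¹' (U ×ˢ univ)
      target := (U ×ˢ (univ : Set ℝ)) ×ˢ (univ : Set F)
      map_source' := fun z hz => ⟨hz, mem_univ _⟩
      map_target' := fun p hp => by
        have h : p.1.1 ∈ U := hp.1.1
        simp only [dif_pos h]
        exact ⟨h, trivial⟩
      left_inv' := fun z hz => by
        have hx : (pr π H z).1 ∈ U := (mem_preimage.1 hz).1
        simp only [dif_pos hx]
        have hcs : clampZ hHcl z ∈ Φ.source :=
          Φ.mem_source.2 (hΦ ⟨hx, cl_mem_Icc _⟩)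
        have hΦc : Φ (clampZ hHcl z) = (((pr π H z).1, cl (pr π H z).2), (Φ (clampZ hHcl z)).2) := by
          refine Prod.ext ?_ rfl
          rw [Φ.coe_fst hcs, pr_clampZ]
        apply Tot.ext
        · rfl
        · show (Φ.toOpenPartialHomeomorph.symm
            (((pr π H z).1, cl (pr π H z).2), (Φ (clampZ hHcl z)).2)).1.2 = z.1.2
          rw [← hΦc]
          have hli : Φ.toOpenPartialHomeomorph.symm (Φ (clampZ hHcl z)) = clampZ hHcl z :=
            Φ.toOpenPartialHomeomorph.left_inv hcs
          rw [hli]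
          rfl
      right_inv' := fun p hp => by
        have hx : p.1.1 ∈ U := hp.1.1
        simp only [dif_pos hx]
        have hbs : (p.1.1, cl p.1.2) ∈ Φ.baseSet := hΦ ⟨hx, cl_mem_Icc _⟩
        have hwt : ((p.1.1, cl p.1.2), p.2) ∈ Φ.target := Φ.mem_target.2 hbs
        set w := Φ.toOpenPartialHomeomorph.symm ((p.1.1, cl p.1.2), p.2) with hw
        have hpra : pr π H w = (p.1.1, cl p.1.2) := Φ.proj_symm_apply hwt
        refine Prod.ext rfl ?_
        have key : ∀ z' : Tot π H, pr π H z' = p.1 → z'.1.2 = w.1.2 →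
            (Φ (clampZ hHcl z')).2 = p.2 := by
          intro z' hz1 hz2
          have hcz : clampZ hHcl z' = w := by
            apply Tot.ext
            · rw [pr_clampZ, hz1, hpra]
            · exact hz2
          rw [hcz]
          have h5 := Φ.apply_symm_apply hwt
          rw [← hw] at h5
          rw [h5]
        exact key _ rfl rfl
      open_source := (continuous_pr π H).isOpen_preimage _ ((hU.prod isOpen_univ))
      open_target := (hU.prod isOpen_univ).prod isOpen_univ
      continuousOn_toFun := by
        refine ContinuousOn.prodMk (continuous_pr π H).continuousOn ?_
        refine continuous_snd.comp_continuousOn ?_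
        refine (Φ.toOpenPartialHomeomorph.continuousOn :
          ContinuousOn (fun z => Φ z) _).comp (continuous_clampZ hHcl).continuousOn ?_
        intro z hz
        exact Φ.mem_source.2 (hΦ ⟨(mem_preimage.1 hz).1, cl_mem_Icc _⟩)
      continuousOn_invFun := by
        refine Topology.IsInducing.subtypeVal.continuousOn_iff.2 ?_
        refine ContinuousOn.congr
          (f := fun p : (B × ℝ) × F =>
            (p.1, (Φ.toOpenPartialHomeomorph.symm ((p.1.1, cl p.1.2), p.2)).1.2)) ?_ ?_
        · refine ContinuousOn.prodMk continuous_fst.continuousOn ?_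
          refine (continuous_snd' π H).comp_continuousOn ?_
          refine Φ.toOpenPartialHomeomorph.continuousOn_symm.comp ?_ ?_
          · exact (((continuous_fst.fst.prodMk
              (continuous_cl.comp continuous_fst.snd)).prodMk continuous_snd)).continuousOn
          · intro p hp
            exact Φ.mem_target.2 (hΦ ⟨hp.1.1, cl_mem_Icc _⟩)
        · intro p hp
          simp only [Function.comp, dif_pos (show p.1.1 ∈ U from hp.1.1)]
      }
  baseSet := U ×ˢ (univ : Set ℝ)
  open_baseSet := hU.prod isOpen_univ
  source_eq := rfl
  target_eq := rfl
  proj_toFun := fun z _ => rfl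

@[simp] lemma clampExt_baseSet :
    (clampExt hHcl Φ hΦ (hU := hU)).baseSet = U ×ˢ (univ : Set ℝ) := rfl

end ClampExt

end ClampOuter

/-- clamp fixes points of `[0,1]`. -/
lemma cl_of_mem {t : ℝ} (h : t ∈ Icc (0:ℝ) 1) : cl t = t := by
  unfold cl
  rw [min_eq_left h.2, max_eq_right h.1]

lemma cl_idem (t : ℝ) : cl (cl t) = cl t := cl_of_mem (cl_mem_Icc t)
section FoldOuter
variable {B E F : Type*} [TopologicalSpace B] [TopologicalSpace E] [TopologicalSpace F]
variable {π : E → B} {H : B × ℝ → B}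
section Fold

variable {ι : Type*} [LinearOrder ι]
variable (f : PartitionOfUnity ι B univ) (U : ι → Set B)
  (Φ : ι → Bundle.Trivialization F (pr π H))
variable (hΦ : ∀ i, (U i) ×ˢ (univ : Set ℝ) ⊆ (Φ i).baseSet)
variable (hsub : f.IsSubordinate U)

/-- Elementary move: push the time coordinate up by `f i` using chart `Φ i`. -/
noncomputable def step (i : ι) (z : Tot π H) : Tot π H :=
  if _ : (pr π H z).1 ∈ U i then
    (Φ i).toOpenPartialHomeomorph.symm
      (((pr π H z).1, (pr π H z).2 + f i (pr π H z).1), ((Φ i) z).2)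
  else z

/-- Elementary inverse move. -/
noncomputable def stepInv (i : ι) (z : Tot π H) : Tot π H :=
  if _ : (pr π H z).1 ∈ U i then
    (Φ i).toOpenPartialHomeomorph.symm
      (((pr π H z).1, (pr π H z).2 - f i (pr π H z).1), ((Φ i) z).2)
  else z

variable {f U Φ}

include hsub in
lemma zero_of_not_mem_U {i : ι} {x : B} (hx : x ∉ U i) : f i x = 0 :=
  image_eq_zero_of_notMem_tsupport (fun hmem => hx (hsub i hmem))

include hΦ

lemma mem_source_of_mem_U {i : ι} {z : Tot π H} (hx : (pr π H z).1 ∈ U i) :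
    z ∈ (Φ i).source :=
  (Φ i).mem_source.2 (hΦ i ⟨hx, trivial⟩)

lemma mem_baseSet_of_mem_U {i : ι} {x : B} (hx : x ∈ U i) (t : ℝ) :
    (x, t) ∈ (Φ i).baseSet := hΦ i ⟨hx, trivial⟩

include hsub

lemma pr_step (i : ι) (z : Tot π H) :
    pr π H (step f U Φ i z) = ((pr π H z).1, (pr π H z).2 + f i (pr π H z).1) := by
  unfold step
  split_ifs with hx
  · exact (Φ i).proj_symm_apply ((Φ i).mem_target.2 (mem_baseSet_of_mem_U hΦ hx _))
  · have h0 : f i (pr π H z).1 = 0 := zero_of_not_mem_U hsub hx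
    rw [h0, add_zero]

lemma pr_stepInv (i : ι) (z : Tot π H) :
    pr π H (stepInv f U Φ i z) = ((pr π H z).1, (pr π H z).2 - f i (pr π H z).1) := by
  unfold stepInv
  split_ifs with hx
  · exact (Φ i).proj_symm_apply ((Φ i).mem_target.2 (mem_baseSet_of_mem_U hΦ hx _))
  · have h0 : f i (pr π H z).1 = 0 := zero_of_not_mem_U hsub hx
    rw [h0, sub_zero]

omit hsub

lemma step_eq_of_zero {i : ι} {z : Tot π H} (h : f i (pr π H z).1 = 0) :
    step f U Φ i z = z := by
  unfold step
  split_ifs with hx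
  · rw [h, add_zero]
    have hzs : z ∈ (Φ i).source := mem_source_of_mem_U hΦ hx
    have h1 : ((pr π H z).1, (pr π H z).2) = pr π H z := rfl
    rw [h1]
    have h2 : (pr π H z, ((Φ i) z).2) = (Φ i) z := Prod.ext ((Φ i).coe_fst hzs).symm rfl
    rw [h2]
    exact (Φ i).toOpenPartialHomeomorph.left_inv hzs
  · rfl

lemma stepInv_eq_of_zero {i : ι} {z : Tot π H} (h : f i (pr π H z).1 = 0) :
    stepInv f U Φ i z = z := by
  unfold stepInv
  split_ifs with hx
  · rw [h, sub_zero]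
    have hzs : z ∈ (Φ i).source := mem_source_of_mem_U hΦ hx
    have h1 : ((pr π H z).1, (pr π H z).2) = pr π H z := rfl
    rw [h1]
    have h2 : (pr π H z, ((Φ i) z).2) = (Φ i) z := Prod.ext ((Φ i).coe_fst hzs).symm rfl
    rw [h2]
    exact (Φ i).toOpenPartialHomeomorph.left_inv hzs
  · rfl

lemma stepInv_step (i : ι) (z : Tot π H) :
    stepInv f U Φ i (step f U Φ i z) = z := by
  by_cases hx : (pr π H z).1 ∈ U i
  · have hzs : z ∈ (Φ i).source := mem_source_of_mem_U hΦ hx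
    have hwt : (((pr π H z).1, (pr π H z).2 + f i (pr π H z).1), ((Φ i) z).2) ∈ (Φ i).target :=
      (Φ i).mem_target.2 (mem_baseSet_of_mem_U hΦ hx _)
    have hstep : step f U Φ i z = (Φ i).toOpenPartialHomeomorph.symm
        (((pr π H z).1, (pr π H z).2 + f i (pr π H z).1), ((Φ i) z).2) := dif_pos hx
    have hprw : pr π H (step f U Φ i z) =
        ((pr π H z).1, (pr π H z).2 + f i (pr π H z).1) := by
      rw [hstep]
      exact (Φ i).proj_symm_apply hwt
    have happ : (Φ i) (step f U Φ i z) =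
        (((pr π H z).1, (pr π H z).2 + f i (pr π H z).1), ((Φ i) z).2) := by
      rw [hstep]
      exact (Φ i).apply_symm_apply hwt
    unfold stepInv
    rw [dif_pos (show (pr π H (step f U Φ i z)).1 ∈ U i by rw [hprw]; exact hx)]
    rw [happ, hprw]
    simp only [add_sub_cancel_right]
    have h2 : (((pr π H z).1, (pr π H z).2), ((Φ i) z).2) = (Φ i) z :=
      Prod.ext ((Φ i).coe_fst hzs).symm rfl
    rw [h2]
    exact (Φ i).toOpenPartialHomeomorph.left_inv hzs
  · have h1 : step f U Φ i z = z := dif_neg hx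
    rw [h1]
    exact dif_neg hx

lemma step_stepInv (i : ι) (z : Tot π H) :
    step f U Φ i (stepInv f U Φ i z) = z := by
  by_cases hx : (pr π H z).1 ∈ U i
  · have hzs : z ∈ (Φ i).source := mem_source_of_mem_U hΦ hx
    have hwt : (((pr π H z).1, (pr π H z).2 - f i (pr π H z).1), ((Φ i) z).2) ∈ (Φ i).target :=
      (Φ i).mem_target.2 (mem_baseSet_of_mem_U hΦ hx _)
    have hstep : stepInv f U Φ i z = (Φ i).toOpenPartialHomeomorph.symm
        (((pr π H z).1, (pr π H z).2 - f i (pr π H z).1), ((Φ i) z).2) := dif_pos hx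
    have hprw : pr π H (stepInv f U Φ i z) =
        ((pr π H z).1, (pr π H z).2 - f i (pr π H z).1) := by
      rw [hstep]
      exact (Φ i).proj_symm_apply hwt
    have happ : (Φ i) (stepInv f U Φ i z) =
        (((pr π H z).1, (pr π H z).2 - f i (pr π H z).1), ((Φ i) z).2) := by
      rw [hstep]
      exact (Φ i).apply_symm_apply hwt
    unfold step
    rw [dif_pos (show (pr π H (stepInv f U Φ i z)).1 ∈ U i by rw [hprw]; exact hx)]
    rw [happ, hprw]
    simp only [sub_add_cancel]
    have h2 : (((pr π H z).1, (pr π H z).2), ((Φ i) z).2) = (Φ i) z :=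
      Prod.ext ((Φ i).coe_fst hzs).symm rfl
    rw [h2]
    exact (Φ i).toOpenPartialHomeomorph.left_inv hzs
  · have h1 : stepInv f U Φ i z = z := dif_neg hx
    rw [h1]
    exact dif_neg hx

include hsub

lemma continuous_step (hUo : ∀ i, IsOpen (U i)) (i : ι) : Continuous (step f U Φ i) := by
  rw [continuous_iff_continuousAt]
  intro z
  by_cases hx : (pr π H z).1 ∈ U i
  · set O := pr π H ⁻¹' ((U i) ×ˢ (univ : Set ℝ)) with hO
    have hOopen : IsOpen O := (continuous_pr π H).isOpen_preimage _
      ((hUo i).prod isOpen_univ)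
    have hzO : z ∈ O := ⟨hx, trivial⟩
    have hsrc : O ⊆ (Φ i).source := by
      intro z' hz'
      exact mem_source_of_mem_U hΦ hz'.1
    have hinner : ContinuousOn
        (fun z' => ((((pr π H z').1, (pr π H z').2 + f i (pr π H z').1), ((Φ i) z').2)))
        O := by
      refine ContinuousOn.prodMk (ContinuousOn.prodMk (continuous_pr π H).fst.continuousOn
        (((continuous_pr π H).snd.add
          ((f i).continuous.comp (continuous_pr π H).fst)).continuousOn)) ?_
      exact continuous_snd.comp_continuousOn
        (((Φ i).toOpenPartialHomeomorph.continuousOn :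
          ContinuousOn (fun z' => (Φ i) z') _).mono hsrc)
    have hg : ContinuousOn (fun z' => (Φ i).toOpenPartialHomeomorph.symm
        ((((pr π H z').1, (pr π H z').2 + f i (pr π H z').1), ((Φ i) z').2))) O := by
      refine (Φ i).toOpenPartialHomeomorph.continuousOn_symm.comp hinner ?_
      intro z' hz'
      exact (Φ i).mem_target.2 (mem_baseSet_of_mem_U hΦ hz'.1 _)
    have heq : EqOn (step f U Φ i) (fun z' => (Φ i).toOpenPartialHomeomorph.symm
        ((((pr π H z').1, (pr π H z').2 + f i (pr π H z').1), ((Φ i) z').2))) O := by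
      intro z' hz'
      exact dif_pos hz'.1
    exact ((hg.congr heq).continuousAt (hOopen.mem_nhds hzO))
  · set O := pr π H ⁻¹' (((tsupport (f i))ᶜ) ×ˢ (univ : Set ℝ)) with hO
    have hOopen : IsOpen O := (continuous_pr π H).isOpen_preimage _
      ((isClosed_tsupport _).isOpen_compl.prod isOpen_univ)
    have hzO : z ∈ O := ⟨fun hmem => hx (hsub i hmem), trivial⟩
    have heq : EqOn (step f U Φ i) id O := by
      intro z' hz'
      exact step_eq_of_zero hΦ (image_eq_zero_of_notMem_tsupport hz'.1)
    exact ((continuousOn_id.congr heq).continuousAt (hOopen.mem_nhds hzO))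

lemma continuous_stepInv (hUo : ∀ i, IsOpen (U i)) (i : ι) : Continuous (stepInv f U Φ i) := by
  rw [continuous_iff_continuousAt]
  intro z
  by_cases hx : (pr π H z).1 ∈ U i
  · set O := pr π H ⁻¹' ((U i) ×ˢ (univ : Set ℝ)) with hO
    have hOopen : IsOpen O := (continuous_pr π H).isOpen_preimage _
      ((hUo i).prod isOpen_univ)
    have hzO : z ∈ O := ⟨hx, trivial⟩
    have hsrc : O ⊆ (Φ i).source := by
      intro z' hz'
      exact mem_source_of_mem_U hΦ hz'.1
    have hinner : ContinuousOn
        (fun z' => ((((pr π H z').1, (pr π H z').2 - f i (pr π H z').1), ((Φ i) z').2)))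
        O := by
      refine ContinuousOn.prodMk (ContinuousOn.prodMk (continuous_pr π H).fst.continuousOn
        (((continuous_pr π H).snd.sub
          ((f i).continuous.comp (continuous_pr π H).fst)).continuousOn)) ?_
      exact continuous_snd.comp_continuousOn
        (((Φ i).toOpenPartialHomeomorph.continuousOn :
          ContinuousOn (fun z' => (Φ i) z') _).mono hsrc)
    have hg : ContinuousOn (fun z' => (Φ i).toOpenPartialHomeomorph.symm
        ((((pr π H z').1, (pr π H z').2 - f i (pr π H z').1), ((Φ i) z').2))) O := by
      refine (Φ i).toOpenPartialHomeomorph.continuousOn_symm.comp hinner ?_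
      intro z' hz'
      exact (Φ i).mem_target.2 (mem_baseSet_of_mem_U hΦ hz'.1 _)
    have heq : EqOn (stepInv f U Φ i) (fun z' => (Φ i).toOpenPartialHomeomorph.symm
        ((((pr π H z').1, (pr π H z').2 - f i (pr π H z').1), ((Φ i) z').2))) O := by
      intro z' hz'
      exact dif_pos hz'.1
    exact ((hg.congr heq).continuousAt (hOopen.mem_nhds hzO))
  · set O := pr π H ⁻¹' (((tsupport (f i))ᶜ) ×ˢ (univ : Set ℝ)) with hO
    have hOopen : IsOpen O := (continuous_pr π H).isOpen_preimage _
      ((isClosed_tsupport _).isOpen_compl.prod isOpen_univ)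
    have hzO : z ∈ O := ⟨fun hmem => hx (hsub i hmem), trivial⟩
    have heq : EqOn (stepInv f U Φ i) id O := by
      intro z' hz'
      exact stepInv_eq_of_zero hΦ (image_eq_zero_of_notMem_tsupport hz'.1)
    exact ((continuousOn_id.congr heq).continuousAt (hOopen.mem_nhds hzO))



section Folds
omit hΦ hsub

variable (f U Φ)

/-- Composite of elementary moves along a list of indices. -/
noncomputable def fold (L : List ι) (z : Tot π H) : Tot π H :=
  L.foldl (fun w i => step f U Φ i w) z

/-- Composite of inverse moves along a list of indices. -/
noncomputable def foldInv (L : List ι) (z : Tot π H) : Tot π H :=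
  L.foldl (fun w i => stepInv f U Φ i w) z

variable {f U Φ}

@[simp] lemma fold_nil (z : Tot π H) : fold f U Φ [] z = z := rfl
@[simp] lemma foldInv_nil (z : Tot π H) : foldInv f U Φ [] z = z := rfl

lemma fold_cons (a : ι) (L : List ι) (z : Tot π H) :
    fold f U Φ (a :: L) z = fold f U Φ L (step f U Φ a z) := rfl
lemma foldInv_cons (a : ι) (L : List ι) (z : Tot π H) :
    foldInv f U Φ (a :: L) z = foldInv f U Φ L (stepInv f U Φ a z) := rfl

lemma fold_append (L₁ L₂ : List ι) (z : Tot π H) :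
    fold f U Φ (L₁ ++ L₂) z = fold f U Φ L₂ (fold f U Φ L₁ z) :=
  List.foldl_append
lemma foldInv_append (L₁ L₂ : List ι) (z : Tot π H) :
    foldInv f U Φ (L₁ ++ L₂) z = foldInv f U Φ L₂ (foldInv f U Φ L₁ z) :=
  List.foldl_append

lemma pr_fold (hB : ∀ i, (U i) ×ˢ (univ : Set ℝ) ⊆ (Φ i).baseSet) (hS : f.IsSubordinate U) (L : List ι) : ∀ z : Tot π H,
    pr π H (fold f U Φ L z) =
      ((pr π H z).1, (pr π H z).2 + (L.map (fun i => f i (pr π H z).1)).sum) := by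
  induction L with
  | nil => intro z; rw [fold_nil]; simp
  | cons a L ih =>
    intro z
    rw [fold_cons, ih (step f U Φ a z), pr_step hB hS]
    simp only [List.map_cons, List.sum_cons]
    exact Prod.ext rfl (add_assoc _ _ _)

lemma pr_foldInv (hB : ∀ i, (U i) ×ˢ (univ : Set ℝ) ⊆ (Φ i).baseSet) (hS : f.IsSubordinate U) (L : List ι) : ∀ z : Tot π H,
    pr π H (foldInv f U Φ L z) =
      ((pr π H z).1, (pr π H z).2 - (L.map (fun i => f i (pr π H z).1)).sum) := by
  induction L with
  | nil => intro z; rw [foldInv_nil]; simp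
  | cons a L ih =>
    intro z
    rw [foldInv_cons, ih (stepInv f U Φ a z), pr_stepInv hB hS]
    simp only [List.map_cons, List.sum_cons]
    exact Prod.ext rfl (sub_sub _ _ _)

lemma fold_base (hB : ∀ i, (U i) ×ˢ (univ : Set ℝ) ⊆ (Φ i).baseSet) (hS : f.IsSubordinate U) (L : List ι) (z : Tot π H) :
    (pr π H (fold f U Φ L z)).1 = (pr π H z).1 := by rw [pr_fold hB hS]

lemma foldInv_base (hB : ∀ i, (U i) ×ˢ (univ : Set ℝ) ⊆ (Φ i).baseSet) (hS : f.IsSubordinate U) (L : List ι) (z : Tot π H) :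
    (pr π H (foldInv f U Φ L z)).1 = (pr π H z).1 := by rw [pr_foldInv hB hS]

lemma foldInv_fold (hB : ∀ i, (U i) ×ˢ (univ : Set ℝ) ⊆ (Φ i).baseSet) (L : List ι) : ∀ z : Tot π H,
    foldInv f U Φ L.reverse (fold f U Φ L z) = z := by
  induction L with
  | nil => intro z; simp
  | cons a L ih =>
    intro z
    rw [fold_cons, List.reverse_cons, foldInv_append, ih (step f U Φ a z)]
    show stepInv f U Φ a (step f U Φ a z) = z
    exact stepInv_step hB a z

lemma fold_foldInv (hB : ∀ i, (U i) ×ˢ (univ : Set ℝ) ⊆ (Φ i).baseSet) (L : List ι) : ∀ z : Tot π H,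
    fold f U Φ L (foldInv f U Φ L.reverse z) = z := by
  induction L with
  | nil => intro z; simp
  | cons a L ih =>
    intro z
    rw [List.reverse_cons, foldInv_append]
    have h1 : foldInv f U Φ [a] (foldInv f U Φ L.reverse z)
        = stepInv f U Φ a (foldInv f U Φ L.reverse z) := rfl
    rw [h1, fold_cons, step_stepInv hB a, ih]

lemma fold_filter (hB : ∀ i, (U i) ×ˢ (univ : Set ℝ) ⊆ (Φ i).baseSet) (hS : f.IsSubordinate U) {x : B} (L : List ι) : ∀ z : Tot π H, (pr π H z).1 = x →
    fold f U Φ (L.filter (fun i => decide (f i x ≠ 0))) z = fold f U Φ L z := by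
  induction L with
  | nil => intro z _; simp
  | cons a L ih =>
    intro z hx
    by_cases h : f a x = 0
    · rw [List.filter_cons_of_neg (by simp [h]), fold_cons,
        step_eq_of_zero hB (by rw [hx]; exact h)]
      exact ih z hx
    · rw [List.filter_cons_of_pos (by simp [h]), fold_cons, fold_cons]
      refine ih (step f U Φ a z) ?_
      rw [pr_step hB hS]
      exact hx

lemma foldInv_filter (hB : ∀ i, (U i) ×ˢ (univ : Set ℝ) ⊆ (Φ i).baseSet) (hS : f.IsSubordinate U) {x : B} (L : List ι) : ∀ z : Tot π H, (pr π H z).1 = x →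
    foldInv f U Φ (L.filter (fun i => decide (f i x ≠ 0))) z = foldInv f U Φ L z := by
  induction L with
  | nil => intro z _; simp
  | cons a L ih =>
    intro z hx
    by_cases h : f a x = 0
    · rw [List.filter_cons_of_neg (by simp [h]), foldInv_cons,
        stepInv_eq_of_zero hB (by rw [hx]; exact h)]
      exact ih z hx
    · rw [List.filter_cons_of_pos (by simp [h]), foldInv_cons, foldInv_cons]
      refine ih (stepInv f U Φ a z) ?_
      rw [pr_stepInv hB hS]
      exact hx

lemma continuous_fold (hB : ∀ i, (U i) ×ˢ (univ : Set ℝ) ⊆ (Φ i).baseSet) (hS : f.IsSubordinate U) (hUo : ∀ i, IsOpen (U i)) (L : List ι) :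
    Continuous (fold f U Φ L) := by
  induction L with
  | nil => exact continuous_id
  | cons a L ih => exact ih.comp (continuous_step hB hS hUo a)

lemma continuous_foldInv (hB : ∀ i, (U i) ×ˢ (univ : Set ℝ) ⊆ (Φ i).baseSet) (hS : f.IsSubordinate U) (hUo : ∀ i, IsOpen (U i)) (L : List ι) :
    Continuous (foldInv f U Φ L) := by
  induction L with
  | nil => exact continuous_id
  | cons a L ih => exact ih.comp (continuous_stepInv hB hS hUo a)

/-- list of sorted filters -/
lemma sort_filter_eq {S T : Finset ι} (p : ι → Prop) [DecidablePred p]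
    (hp : ∀ i, i ∈ S ↔ (i ∈ T ∧ p i)) :
    (T.sort (· ≤ ·)).filter (fun i => decide (p i)) = S.sort (· ≤ ·) := by
  refine (fun h1 h2 => List.Perm.eq_of_pairwise' h2 (Finset.pairwise_sort _ _) h1) ?_ ?_
  · rw [List.perm_ext_iff_of_nodup ((Finset.sort_nodup _ _).sublist List.filter_sublist)
      (Finset.sort_nodup _ _)]
    · intro i
      rw [List.mem_filter, Finset.mem_sort, Finset.mem_sort, decide_eq_true_eq, ← hp i]
  · exact (Finset.pairwise_sort _ _).sublist List.filter_sublist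

variable (f U Φ)

/-- Finset of indices whose bump function is nonzero at `x`. -/
noncomputable def Sx (x : B) : Finset ι :=
  (f.locallyFinite.point_finite x).toFinset

lemma mem_Sx {x : B} {i : ι} : i ∈ Sx f x ↔ f i x ≠ 0 := by
  rw [Sx, Set.Finite.mem_toFinset]
  exact Function.mem_support

/-- The global sliding map: composite of all elementary moves, in increasing order. -/
noncomputable def Phi (z : Tot π H) : Tot π H :=
  fold f U Φ ((Sx f (pr π H z).1).sort (· ≤ ·)) z

/-- Its inverse. -/
noncomputable def PhiInv (z : Tot π H) : Tot π H :=
  foldInv f U Φ ((Sx f (pr π H z).1).sort (· ≤ ·)).reverse z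

variable {f U Φ}

lemma pr_Phi (hB : ∀ i, (U i) ×ˢ (univ : Set ℝ) ⊆ (Φ i).baseSet) (hS : f.IsSubordinate U) (z : Tot π H) : pr π H (Phi f U Φ z) = ((pr π H z).1, (pr π H z).2 + 1) := by
  rw [Phi, pr_fold hB hS]
  congr 1
  have hsum : ((((Sx f (pr π H z).1).sort (· ≤ ·))).map (fun i => f i (pr π H z).1)).sum
      = ∑ i ∈ Sx f (pr π H z).1, f i (pr π H z).1 :=
    (List.Perm.map _ (Finset.sort_perm_toList _ _)).sum_eq.trans
      (Finset.sum_map_toList _ _)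
  rw [hsum]
  have := f.sum_eq_one (mem_univ (pr π H z).1)
  rw [← this]
  congr 1
  refine (finsum_eq_sum_of_support_subset _ ?_).symm
  intro i hi
  simpa [mem_Sx] using hi

lemma pr_PhiInv (hB : ∀ i, (U i) ×ˢ (univ : Set ℝ) ⊆ (Φ i).baseSet) (hS : f.IsSubordinate U) (z : Tot π H) : pr π H (PhiInv f U Φ z) = ((pr π H z).1, (pr π H z).2 - 1) := by
  rw [PhiInv, pr_foldInv hB hS]
  congr 1
  have hsum : (((((Sx f (pr π H z).1).sort (· ≤ ·))).reverse.map (fun i => f i (pr π H z).1)).sum)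
      = ∑ i ∈ Sx f (pr π H z).1, f i (pr π H z).1 := by
    rw [List.map_reverse, List.sum_reverse]
    exact (List.Perm.map _ (Finset.sort_perm_toList _ _)).sum_eq.trans
      (Finset.sum_map_toList _ _)
  rw [hsum]
  have := f.sum_eq_one (mem_univ (pr π H z).1)
  rw [← this]
  congr 1
  refine (finsum_eq_sum_of_support_subset _ ?_).symm
  intro i hi
  simpa [mem_Sx] using hi

lemma PhiInv_Phi (hB : ∀ i, (U i) ×ˢ (univ : Set ℝ) ⊆ (Φ i).baseSet) (hS : f.IsSubordinate U) (z : Tot π H) : PhiInv f U Φ (Phi f U Φ z) = z := by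
  have hbase : (pr π H (Phi f U Φ z)).1 = (pr π H z).1 := by rw [pr_Phi hB hS]
  rw [PhiInv, hbase]
  exact foldInv_fold hB _ z

lemma Phi_PhiInv (hB : ∀ i, (U i) ×ˢ (univ : Set ℝ) ⊆ (Φ i).baseSet) (hS : f.IsSubordinate U) (z : Tot π H) : Phi f U Φ (PhiInv f U Φ z) = z := by
  have hbase : (pr π H (PhiInv f U Φ z)).1 = (pr π H z).1 := by rw [pr_PhiInv hB hS]
  rw [Phi, hbase]
  exact fold_foldInv hB _ z

lemma continuous_Phi (hB : ∀ i, (U i) ×ˢ (univ : Set ℝ) ⊆ (Φ i).baseSet) (hS : f.IsSubordinate U) (hUo : ∀ i, IsOpen (U i)) : Continuous (Phi f U Φ) := by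
  rw [continuous_iff_continuousAt]
  intro z₀
  obtain ⟨V, hV, hfin⟩ := f.locallyFinite.closure (pr π H z₀).1
  obtain ⟨O, hOV, hOopen, hxO⟩ := mem_nhds_iff.1 hV
  set T : Finset ι := hfin.toFinset with hT
  have hkey : ∀ z : Tot π H, (pr π H z).1 ∈ O → Phi f U Φ z = fold f U Φ (T.sort (· ≤ ·)) z := by
    intro z hzO
    have hfilter : (T.sort (· ≤ ·)).filter (fun i => decide (f i (pr π H z).1 ≠ 0))
        = (Sx f (pr π H z).1).sort (· ≤ ·) := by
      refine sort_filter_eq (S := Sx f (pr π H z).1) (T := T)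
        (fun i => f i (pr π H z).1 ≠ 0) ?_
      intro i
      rw [mem_Sx, hT, Set.Finite.mem_toFinset]
      constructor
      · intro hi
        refine ⟨⟨(pr π H z).1, ?_, hOV hzO⟩, hi⟩
        exact subset_closure (Function.mem_support.2 hi)
      · exact fun h => h.2
    rw [Phi, ← hfilter]
    exact fold_filter hB hS _ z rfl
  have hO' : IsOpen (pr π H ⁻¹' (O ×ˢ (univ : Set ℝ))) :=
    (continuous_pr π H).isOpen_preimage _ (hOopen.prod isOpen_univ)
  have hz₀O : z₀ ∈ pr π H ⁻¹' (O ×ˢ (univ : Set ℝ)) := ⟨hxO, trivial⟩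
  refine ContinuousAt.congr ((continuous_fold hB hS hUo (T.sort (· ≤ ·))).continuousAt) ?_
  refine Filter.eventuallyEq_of_mem (hO'.mem_nhds hz₀O) ?_
  intro z hz
  exact (hkey z hz.1).symm

lemma continuous_PhiInv (hB : ∀ i, (U i) ×ˢ (univ : Set ℝ) ⊆ (Φ i).baseSet) (hS : f.IsSubordinate U) (hUo : ∀ i, IsOpen (U i)) : Continuous (PhiInv f U Φ) := by
  rw [continuous_iff_continuousAt]
  intro z₀
  obtain ⟨V, hV, hfin⟩ := f.locallyFinite.closure (pr π H z₀).1
  obtain ⟨O, hOV, hOopen, hxO⟩ := mem_nhds_iff.1 hV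
  set T : Finset ι := hfin.toFinset with hT
  have hkey : ∀ z : Tot π H, (pr π H z).1 ∈ O →
      PhiInv f U Φ z = foldInv f U Φ ((T.sort (· ≤ ·)).reverse) z := by
    intro z hzO
    have hfilter : (T.sort (· ≤ ·)).filter (fun i => decide (f i (pr π H z).1 ≠ 0))
        = (Sx f (pr π H z).1).sort (· ≤ ·) := by
      refine sort_filter_eq (S := Sx f (pr π H z).1) (T := T)
        (fun i => f i (pr π H z).1 ≠ 0) ?_
      intro i
      rw [mem_Sx, hT, Set.Finite.mem_toFinset]
      constructor
      · intro hi
        refine ⟨⟨(pr π H z).1, ?_, hOV hzO⟩, hi⟩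
        exact subset_closure (Function.mem_support.2 hi)
      · exact fun h => h.2
    rw [PhiInv, ← hfilter, ← List.filter_reverse]
    exact foldInv_filter hB hS _ z rfl
  have hO' : IsOpen (pr π H ⁻¹' (O ×ˢ (univ : Set ℝ))) :=
    (continuous_pr π H).isOpen_preimage _ (hOopen.prod isOpen_univ)
  have hz₀O : z₀ ∈ pr π H ⁻¹' (O ×ˢ (univ : Set ℝ)) := ⟨hxO, trivial⟩
  refine ContinuousAt.congr
    ((continuous_foldInv hB hS hUo ((T.sort (· ≤ ·)).reverse)).continuousAt) ?_
  refine Filter.eventuallyEq_of_mem (hO'.mem_nhds hz₀O) ?_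
  intro z hz
  exact (hkey z hz.1).symm

end Folds

end Fold
end FoldOuter

end ContractibleTrivProof

open ContractibleTrivProof Set

/-- **Theorem 1 (Appendix A).** A fiber bundle with typical fiber `F` over a
contractible (paracompact Hausdorff) base is trivial: if `π : E → B` is a continuous
surjection that is locally trivial (every point of the base lies in the base set of some
local trivialization with fiber `F`), and `B` is contractible, paracompact and
Hausdorff, then there is a trivialization of `π` whose base set is all of `B`, i.e. a
fiberwise homeomorphism `E ≃ B × F` over `B`. -/
theorem fiberBundle_over_contractible_base_is_trivial
    {E B F : Type*} [TopologicalSpace E] [TopologicalSpace B] [TopologicalSpace F]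
    [ContractibleSpace B] [ParacompactSpace B] [T2Space B]
    (π : E → B) (hcont : Continuous π) (hsurj : Function.Surjective π)
    (hloctriv : ∀ b : B, ∃ e : Bundle.Trivialization F π, b ∈ e.baseSet) :
    ∃ e : Bundle.Trivialization F π, e.baseSet = Set.univ := by
  classical
  obtain ⟨b0, hhom⟩ := id_nullhomotopic B
  obtain ⟨Hh⟩ := hhom
  set H : B × ℝ → B := fun p => Hh (⟨cl p.2, cl_mem_Icc p.2⟩, p.1) with hHdef
  have hH : Continuous H := Hh.continuous.comp
    (((continuous_cl.comp continuous_snd).subtype_mk _).prodMk continuous_fst)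
  have hHcl : ∀ p : B × ℝ, H p = H (p.1, cl p.2) := by
    intro p
    simp only [hHdef]
    congr 2
    exact Subtype.ext (cl_idem p.2).symm
  have hH0 : ∀ x : B, H (x, (0:ℝ)) = x := by
    intro x
    have h0 : cl (0:ℝ) = 0 := cl_of_mem ⟨le_refl _, zero_le_one⟩
    simp only [hHdef]
    have : (⟨cl (0:ℝ), cl_mem_Icc 0⟩ : unitInterval) = 0 := Subtype.ext h0
    rw [this]
    exact Hh.apply_zero x
  have hH1 : ∀ x : B, H (x, (1:ℝ)) = b0 := by
    intro x
    have h1 : cl (1:ℝ) = 1 := cl_of_mem ⟨zero_le_one, le_refl _⟩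
    simp only [hHdef]
    have : (⟨cl (1:ℝ), cl_mem_Icc 1⟩ : unitInterval) = 1 := Subtype.ext h1
    rw [this]
    exact Hh.apply_one x
  obtain ⟨v0, hv0⟩ := hsurj b0
  haveI : Nonempty (Tot π H) := ⟨⟨((b0, 0), v0), by rw [hv0, hH0]⟩⟩
  have hq : ∀ p : B × ℝ, ∃ e : Bundle.Trivialization F (pr π H), p ∈ e.baseSet := by
    intro p
    obtain ⟨e, he⟩ := hloctriv (H p)
    exact ⟨pb hH e, he⟩
  have hstrip := fun x : B => exists_strip hq x
  choose U hUo hxU Φ₀ hΦ₀ using hstrip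
  set Φx : B → Bundle.Trivialization F (pr π H) :=
    fun x => clampExt hHcl (Φ₀ x) (hUo x) (hΦ₀ x) with hΦx
  have hB6 : ∀ i : B, (U i) ×ˢ (univ : Set ℝ) ⊆ (Φx i).baseSet := fun i => subset_rfl
  letI : LinearOrder B := IsWellOrder.linearOrder WellOrderingRel
  haveI : NormalSpace B := inferInstance
  obtain ⟨f, hf⟩ := PartitionOfUnity.exists_isSubordinate isClosed_univ U hUo
    (fun x _ => mem_iUnion.2 ⟨x, hxU x⟩)
  obtain ⟨e₀, hb0⟩ := hloctriv b0
  set ζ : E → Tot π H := fun v => ⟨((π v, (0:ℝ)), v), (hH0 (π v)).symm⟩ with hζdef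
  set ξ : B × F → Tot π H := fun p =>
    ⟨((p.1, (1:ℝ)), e₀.toOpenPartialHomeomorph.symm (b0, p.2)),
      (e₀.proj_symm_apply (e₀.mem_target.2 hb0)).trans (hH1 p.1).symm⟩ with hξdef
  set G : E → Tot π H := fun v => Phi f U Φx (ζ v) with hGdef
  set G' : B × F → Tot π H := fun p => PhiInv f U Φx (ξ p) with hG'def
  have hprζ : ∀ v, pr π H (ζ v) = (π v, (0:ℝ)) := fun v => rfl
  have hprG : ∀ v, pr π H (G v) = (π v, (1:ℝ)) := by
    intro v
    rw [hGdef]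
    show pr π H (Phi f U Φx (ζ v)) = _
    rw [pr_Phi hB6 hf, hprζ]
    norm_num
  have hπG : ∀ v, π (G v).1.2 = b0 := by
    intro v
    have h := (G v).prop'
    rw [hprG v] at h
    rw [h, hH1]
  have hGsrc : ∀ v, (G v).1.2 ∈ e₀.source := fun v => e₀.mem_source.2 (by rw [hπG v]; exact hb0)
  have hprξ : ∀ p, pr π H (ξ p) = (p.1, (1:ℝ)) := fun p => rfl
  have hprG' : ∀ p, pr π H (G' p) = (p.1, (0:ℝ)) := by
    intro p
    rw [hG'def]
    show pr π H (PhiInv f U Φx (ξ p)) = _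
    rw [pr_PhiInv hB6 hf, hprξ]
    norm_num
  have hπG' : ∀ p, π (G' p).1.2 = p.1 := by
    intro p
    have h := (G' p).prop'
    rw [hprG' p] at h
    rw [h, hH0]
  refine ⟨{
    toOpenPartialHomeomorph :=
      { toFun := fun v => (π v, (e₀ (G v).1.2).2)
        invFun := fun p => (G' p).1.2
        source := univ
        target := univ
        map_source' := fun v _ => mem_univ _
        map_target' := fun p _ => mem_univ _
        left_inv' := by
          intro v _
          show (G' (π v, (e₀ (G v).1.2).2)).1.2 = v
          have h1 : e₀ (G v).1.2 = (b0, (e₀ (G v).1.2).2) :=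
            Prod.ext (by rw [e₀.coe_fst (hGsrc v), hπG v]) rfl
          have h2 : e₀.toOpenPartialHomeomorph.symm (b0, (e₀ (G v).1.2).2) = (G v).1.2 := by
            rw [← h1]
            exact e₀.toOpenPartialHomeomorph.left_inv (hGsrc v)
          have h3 : ξ (π v, (e₀ (G v).1.2).2) = G v := by
            apply Tot.ext
            · show ((π v : B), (1:ℝ)) = pr π H (G v)
              rw [hprG v]
            · exact h2
          show (PhiInv f U Φx (ξ (π v, (e₀ (G v).1.2).2))).1.2 = v
          rw [h3, hGdef]
          show (PhiInv f U Φx (Phi f U Φx (ζ v))).1.2 = v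
          rw [PhiInv_Phi hB6 hf]
        right_inv' := by
          intro p _
          show (π (G' p).1.2, (e₀ (G ((G' p).1.2)).1.2).2) = p
          have hζG' : ζ ((G' p).1.2) = G' p := by
            apply Tot.ext
            · show ((π (G' p).1.2 : B), (0:ℝ)) = pr π H (G' p)
              rw [hπG' p, hprG' p]
            · rfl
          have hGG' : G ((G' p).1.2) = ξ p := by
            rw [hGdef]
            show Phi f U Φx (ζ ((G' p).1.2)) = ξ p
            rw [hζG', hG'def]
            show Phi f U Φx (PhiInv f U Φx (ξ p)) = ξ p
            exact Phi_PhiInv hB6 hf _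
          rw [hGG']
          have hξ12 : (ξ p).1.2 = e₀.toOpenPartialHomeomorph.symm (b0, p.2) := rfl
          rw [hξ12]
          have h4 : e₀ (e₀.toOpenPartialHomeomorph.symm (b0, p.2)) = (b0, p.2) :=
            e₀.apply_symm_apply (e₀.mem_target.2 hb0)
          rw [h4]
          exact Prod.ext (hπG' p) rfl
        open_source := isOpen_univ
        open_target := isOpen_univ
        continuousOn_toFun := by
          apply Continuous.continuousOn
          have hζc : Continuous ζ :=
            Continuous.subtype_mk ((hcont.prodMk continuous_const).prodMk continuous_id) _
          have hGc : Continuous G := (continuous_Phi hB6 hf hUo).comp hζc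
          have hc2 : Continuous (fun v => (e₀ (G v).1.2)) :=
            e₀.toOpenPartialHomeomorph.continuousOn.comp_continuous
              ((continuous_snd' π H).comp hGc) (fun v => hGsrc v)
          exact hcont.prodMk (continuous_snd.comp hc2)
        continuousOn_invFun := by
          apply Continuous.continuousOn
          have hsymc : Continuous (fun p : B × F => e₀.toOpenPartialHomeomorph.symm (b0, p.2)) :=
            e₀.toOpenPartialHomeomorph.continuousOn_symm.comp_continuous
              (continuous_const.prodMk continuous_snd)
              (fun p => e₀.mem_target.2 hb0)
          have hξc : Continuous ξ :=
            Continuous.subtype_mk ((continuous_fst.prodMk continuous_const).prodMk hsymc) _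
          have hG'c : Continuous G' := (continuous_PhiInv hB6 hf hUo).comp hξc
          exact (continuous_snd' π H).comp hG'c }
    baseSet := univ
    open_baseSet := isOpen_univ
    source_eq := preimage_univ.symm
    target_eq := univ_prod_univ.symm
    proj_toFun := fun v _ => rfl }, rfl⟩
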